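/- Let $f(z)=\sum_{k=1}^\infty a_kz^{n_k}$ with $a_k\neq 0$ and $n_{k+1}>n_k^2$ for all $k$. Then $f$ is transcendental over $\mathbb{C}(z)$: for every nonzero polynomial $P\in\mathbb{C}[X,Y]$, the function $z\mapsto P(z,f(z))$ is not identically zero. -/

import Mathlib

/-!
Write `P` as `Q = ∑_{j ≤ s} Q_j(X) Y^j` with leading coefficient `L` of degree `r`. Pick `k` with
`M = n_k` exceeding `s` and every `deg Q_j`, and let `F` be the truncation of `f` at degree `M`;
its coefficient of `X^M` is `a_k`. In `Q(F)` only `L F^s` reaches degree `r + sM`, where its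
coefficient is `lc(L) a_k^s ≠ 0`. As `f` has no exponents strictly between `M` and
`n_{k+1} > M^2 > r + sM`, we have `P(X, f) ≡ Q(F) mod X^{n_{k+1}}`, so that coefficient survives.
-/

open Polynomial Polynomial.Bivariate

theorem Polynomial.Bivariate.aeval_X_equivMvPolynomial {R : Type*} [CommSemiring R]
    (Q : R[X][Y]) (y : PowerSeries R) :
    MvPolynomial.aeval ![PowerSeries.X, y] (equivMvPolynomial R Q) =
      (Q.map coeToPowerSeries.ringHom).eval y := by
  induction Q using Polynomial.induction_on' with
  | add p q hp hq => simp [hp, hq]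
  | monomial n p =>
    induction p using Polynomial.induction_on' with
    | add p q hp hq => simp only [map_add, Polynomial.map_add, eval_add, hp, hq]
    | monomial m a => simp [equivMvPolynomial, ← C_mul_X_pow_eq_monomial]

theorem Polynomial.natDegree_coeff_le_sup {R : Type*} [Semiring R] (Q : R[X][Y]) (j : ℕ) :
    (Q.coeff j).natDegree ≤ Q.support.sup fun i => (Q.coeff i).natDegree := by
  by_cases hj : j ∈ Q.support
  · exact Finset.le_sup (f := fun i => (Q.coeff i).natDegree) hj
  · simp [notMem_support_iff.mp hj]

theorem Polynomial.coeff_eval_of_natDegree_le {R : Type*} [CommSemiring R]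
    (Q : R[X][Y]) {F : R[X]} {M : ℕ} (hF : F.natDegree ≤ M)
    (hQ : ∀ j, (Q.coeff j).natDegree < M) :
    (Q.eval F).coeff (Q.leadingCoeff.natDegree + Q.natDegree * M) =
      Q.leadingCoeff.leadingCoeff * F.coeff M ^ Q.natDegree := by
  have hlower : ∀ j < Q.natDegree,
      (Q.coeff j * F ^ j).natDegree < Q.leadingCoeff.natDegree + Q.natDegree * M := by
    intro j hj
    calc (Q.coeff j * F ^ j).natDegree ≤ (Q.coeff j).natDegree + j * M :=
          natDegree_mul_le_of_le le_rfl (natDegree_pow_le_of_le j hF)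
      _ < M + j * M := by gcongr; exact hQ j
      _ ≤ Q.leadingCoeff.natDegree + Q.natDegree * M := by nlinarith
  rw [eval_eq_sum_range, Finset.sum_range_succ, coeff_add, finsetSum_coeff,
    Finset.sum_eq_zero fun j hj => coeff_eq_zero_of_natDegree_lt (hlower j (Finset.mem_range.mp hj)),
    zero_add]
  exact (coeff_mul_add_eq_of_natDegree_le le_rfl (natDegree_pow_le_of_le _ hF)).trans
    (congrArg _ (coeff_pow_of_natDegree_le hF))

theorem PowerSeries.X_pow_dvd_sub_trunc {R : Type*} [CommRing R] {f : PowerSeries R} {M K : ℕ}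
    (hgap : ∀ m ∈ Set.Ioo M K, coeff m f = 0) :
    X ^ K ∣ f - (trunc (M + 1) f : PowerSeries R) := by
  rw [X_pow_dvd_iff]
  intro m hm
  rw [map_sub, Polynomial.coeff_coe, coeff_trunc, sub_eq_zero]
  split_ifs with h
  · rfl
  · exact hgap m ⟨by omega, hm⟩

theorem PowerSeries.coeff_eval_map_eq_coeff_eval_trunc {R : Type*} [CommRing R] (Q : R[X][Y])
    {f : PowerSeries R} {M K N : ℕ} (hgap : ∀ m ∈ Set.Ioo M K, coeff m f = 0) (hN : N < K) :
    coeff N ((Q.map coeToPowerSeries.ringHom).eval f) = (Q.eval (trunc (M + 1) f)).coeff N := by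
  have hdvd := (X_pow_dvd_sub_trunc hgap).trans
    (sub_dvd_eval_sub _ _ (Q.map coeToPowerSeries.ringHom))
  have h := X_pow_dvd_iff.mp hdvd N hN
  rwa [map_sub, sub_eq_zero, ← coeToPowerSeries.ringHom_apply (φ := trunc _ f), eval_map_apply,
    coeToPowerSeries.ringHom_apply, Polynomial.coeff_coe] at h

theorem strictMonoOn_Ici_of_sq_lt {n : ℕ → ℕ} (hn : ∀ k ≥ 1, n k ^ 2 < n (k + 1)) :
    StrictMonoOn n (Set.Ici 1) :=
  strictMonoOn_of_lt_add_one Set.ordConnected_Ici fun k _ hk _ =>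
    (Nat.le_self_pow two_ne_zero _).trans_lt (hn k hk)

theorem exists_lt_of_strictMonoOn_Ici {n : ℕ → ℕ} (hn : StrictMonoOn n (Set.Ici 1)) (B : ℕ) :
    ∃ k ≥ 1, B < n k := by
  have hshift : StrictMono fun k => n (k + 1) := fun i j h => hn (by simp) (by simp) (by omega)
  exact ⟨B + 2, by omega, hshift.id_le (B + 1)⟩

theorem PowerSeries.coeff_eq_zero_of_mem_Ioo {R : Type*} [Semiring R] {f : PowerSeries R}
    {n : ℕ → ℕ} (hn : StrictMonoOn n (Set.Ici 1))
    (hf : ∀ i, (∀ k ≥ 1, n k ≠ i) → coeff i f = 0) {k m : ℕ} (hk : 1 ≤ k)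
    (hm : m ∈ Set.Ioo (n k) (n (k + 1))) : coeff m f = 0 := by
  refine hf m fun j hj hjm => ?_
  subst hjm
  rcases le_or_gt j k with h | h
  · exact (hn.monotoneOn hj hk h).not_gt hm.1
  · exact (hn.monotoneOn (by simp) hj h).not_gt hm.2

/-- A lacunary series `f(z) = ∑_{k≥1} a_k z^{n_k}` with `a_k ≠ 0` and
`n_{k+1} > n_k²` is transcendental: for every nonzero polynomial `P ∈ ℂ[X,Y]`,
the series `P(z, f(z))` is not identically zero. -/
theorem stmt15 (a : ℕ → ℂ) (n : ℕ → ℕ)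
    (ha : ∀ k ≥ 1, a k ≠ 0) (hn : ∀ k ≥ 1, (n k) ^ 2 < n (k + 1))
    (f : PowerSeries ℂ)
    (hf1 : ∀ k ≥ 1, PowerSeries.coeff (n k) f = a k)
    (hf2 : ∀ i : ℕ, (∀ k ≥ 1, n k ≠ i) → PowerSeries.coeff i f = 0) :
    ∀ P : MvPolynomial (Fin 2) ℂ, P ≠ 0 →
      MvPolynomial.aeval ![PowerSeries.X, f] P ≠ 0 := by
  have hmono := strictMonoOn_Ici_of_sq_lt hn
  intro P hP
  obtain ⟨Q, rfl⟩ := (equivMvPolynomial ℂ).surjective P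
  have hQ : Q ≠ 0 := by rintro rfl; exact hP (map_zero _)
  obtain ⟨k, hk, hM⟩ := exists_lt_of_strictMonoOn_Ici hmono
    (max Q.natDegree (Q.support.sup fun j => (Q.coeff j).natDegree))
  have hQM : ∀ j, (Q.coeff j).natDegree < n k := fun j =>
    (natDegree_coeff_le_sup Q j).trans_lt ((le_max_right _ _).trans_lt hM)
  have hN : Q.leadingCoeff.natDegree + Q.natDegree * n k < n (k + 1) :=
    calc _ < n k + Q.natDegree * n k := by gcongr; exact hQM _
      _ ≤ n k ^ 2 := by nlinarith [(le_max_left _ _).trans_lt hM]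
      _ < n (k + 1) := hn k hk
  have htop : PowerSeries.coeff (Q.leadingCoeff.natDegree + Q.natDegree * n k)
      (MvPolynomial.aeval ![PowerSeries.X, f] (equivMvPolynomial ℂ Q)) =
        Q.leadingCoeff.leadingCoeff * a k ^ Q.natDegree := by
    rw [aeval_X_equivMvPolynomial, PowerSeries.coeff_eval_map_eq_coeff_eval_trunc Q
        (fun m => PowerSeries.coeff_eq_zero_of_mem_Ioo hmono hf2 hk) hN,
      coeff_eval_of_natDegree_le Q (Nat.lt_succ_iff.mp (PowerSeries.natDegree_trunc_lt f _)) hQM,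
      PowerSeries.coeff_trunc, if_pos (Nat.lt_succ_self _), hf1 k hk]
  intro h0
  rw [h0, map_zero] at htop
  exact mul_ne_zero (leadingCoeff_ne_zero.mpr (leadingCoeff_ne_zero.mpr hQ))
    (pow_ne_zero _ (ha k hk)) htop.symm
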